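/- Let n > 2k, 1 ≤ p ≤ k, and B_p(n,k) = {A ⊆ {1,...,n} : |A| = k, |A ∩ [2p−1]| ≥ p} where [2p−1] = {1,...,2p−1}. Then |I(B_p(n,k))| = Σ_{i=1}^{p−1} C(2p−1, i) Σ_{j=0}^{k−p} C(n−2p+1, j) + Σ_{i=p}^{2p−1} C(2p−1, i) Σ_{j=0}^{k−i−1} C(n−2p+1, j), where I(F) denotes the family of distinct intersections F ∩ F' over distinct members F, F'. -/

import Mathlib

open Finset

/-- A family of finite sets is intersecting if any two members meet. -/
def Intersecting (F : Finset (Finset ℕ)) : Prop :=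
  ∀ A ∈ F, ∀ B ∈ F, (A ∩ B).Nonempty

/-- `T` is a transversal of `F` inside `{1,…,n}` of size at most `k`. -/
def Transversal (n k : ℕ) (F : Finset (Finset ℕ)) (T : Finset ℕ) : Prop :=
  T ⊆ Finset.Icc 1 n ∧ T.card ≤ k ∧ ∀ A ∈ F, (T ∩ A).Nonempty

/-- `B` is an inclusion-minimal transversal of `F`. -/
def MinTrans (n k : ℕ) (F : Finset (Finset ℕ)) (B : Finset ℕ) : Prop :=
  Transversal n k F B ∧ ∀ T, Transversal n k F T → T ⊆ B → T = B

/-- `F` is a saturated intersecting family of `k`-subsets of `{1,…,n}`. -/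
def Saturated (n k : ℕ) (F : Finset (Finset ℕ)) : Prop :=
  Intersecting F ∧
    ∀ G ∈ (Finset.Icc 1 n).powersetCard k, G ∉ F → ¬ Intersecting (insert G F)

/-- The family of distinct pairwise intersections of distinct members of `F`. -/
def interFam (F : Finset (Finset ℕ)) : Finset (Finset ℕ) :=
  ((F ×ˢ F).filter fun p => p.1 ≠ p.2).image fun p => p.1 ∩ p.2

/-!
Put `W = [2p-1]`. Two members of `B_p(n,k)` have at least `p` points each in the
`(2p-1)`-set `W`, so they meet there; hence an intersection `S = A ∩ A'` of distinct members
has a nonempty trace on `W`, at most `k - p` points outside `W` (as many as `A` has), and fewer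
than `k` points. Conversely such an `S` is padded to a member of `B_p(n,k)` by adding
`p - |S ∩ W|` new points of `W` and then new points outside `W` up to size `k`; `|W| = 2p-1`
and `2k < n` leave room to do this in two disjoint ways, giving two members meeting exactly
in `S`. Counting the sets `S` by the sizes of their traces on `W` and off `W` gives the formula.
-/

section Counting

variable {α : Type*} [DecidableEq α]

lemma card_filter_powerset_card_inter_card_sdiff {W Ω : Finset α} (hWΩ : W ⊆ Ω)
    (P : ℕ → ℕ → Prop) [DecidableRel P] :
    #{S ∈ Ω.powerset | P #(S ∩ W) #(S \ W)} =
      ∑ i ∈ range (#W + 1), (#W).choose i *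
        ∑ j ∈ range (#(Ω \ W) + 1) with P i j, (#(Ω \ W)).choose j := by
  have trace_union {A B : Finset α} (hA : A ⊆ W) (hB : B ⊆ Ω \ W) :
      (A ∪ B) ∩ W = A ∧ (A ∪ B) \ W = B := by
    constructor <;> ext x <;> grind
  have decompose : #{S ∈ Ω.powerset | P #(S ∩ W) #(S \ W)} =
      #{q ∈ W.powerset ×ˢ (Ω \ W).powerset | P #q.1 #q.2} := by
    refine card_nbij' (fun S => (S ∩ W, S \ W)) (fun q => q.1 ∪ q.2) ?_ ?_ ?_ ?_ <;>
      simp only [coe_filter, Set.MapsTo, Set.LeftInvOn, Set.mem_ofPred_eq, mem_powerset,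
        mem_product, Prod.forall, Prod.mk.injEq]
    · intro S ⟨hS, hP⟩
      exact ⟨⟨inter_subset_right, sdiff_subset_sdiff hS le_rfl⟩, hP⟩
    · intro A B ⟨⟨hA, hB⟩, hP⟩
      rw [(trace_union hA hB).1, (trace_union hA hB).2]
      exact ⟨union_subset (hA.trans hWΩ) (hB.trans sdiff_subset), hP⟩
    · intro S _
      exact sup_inf_sdiff S W
    · intro A B ⟨⟨hA, hB⟩, _⟩
      exact trace_union hA hB
  rw [decompose, card_filter, sum_product]
  dsimp only
  rw [sum_powerset_apply_card (fun i => ∑ y ∈ (Ω \ W).powerset, if P i #y then 1 else 0)]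
  refine sum_congr rfl fun i _ => ?_
  rw [sum_powerset_apply_card (fun j => if P i j then 1 else 0), smul_eq_mul, sum_filter]
  simp only [smul_eq_mul, mul_boole]

end Counting

lemma mem_interFam {F : Finset (Finset ℕ)} {S : Finset ℕ} :
    S ∈ interFam F ↔ ∃ A ∈ F, ∃ B ∈ F, A ≠ B ∧ A ∩ B = S := by
  simp [interFam, and_assoc]

section Witnesses

variable {α : Type*} [DecidableEq α]

lemma card_inter_lt_of_ne {A B : Finset α} (hAB : A ≠ B) (hcard : #A = #B) :
    #(A ∩ B) < #A := by
  refine card_lt_card (inter_subset_left.ssubset_of_ne fun h => hAB ?_)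
  exact eq_of_subset_of_card_le (inter_eq_left.1 h) hcard.ge

lemma exists_disjoint_subsets_card_eq {s : Finset α} {m : ℕ} (h : 2 * m ≤ #s) :
    ∃ U ⊆ s, ∃ V ⊆ s, Disjoint U V ∧ #U = m ∧ #V = m := by
  obtain ⟨U, hUs, hU⟩ := exists_subset_card_eq (show m ≤ #s by omega)
  obtain ⟨V, hVs, hV⟩ := exists_subset_card_eq (show m ≤ #(s \ U) by
    rw [card_sdiff_of_subset hUs]; omega)
  exact ⟨U, hUs, V, hVs.trans sdiff_subset, disjoint_of_subset_right hVs disjoint_sdiff, hU, hV⟩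

end Witnesses

def thresholdFamily (Ω W : Finset ℕ) (k p : ℕ) : Finset (Finset ℕ) :=
  {A ∈ Ω.powersetCard k | p ≤ #(A ∩ W)}

section Threshold

variable {Ω W S : Finset ℕ} {k p : ℕ}

lemma trace_of_mem_interFam_thresholdFamily (hW : #W + 1 = 2 * p)
    (hS : S ∈ interFam (thresholdFamily Ω W k p)) :
    S ⊆ Ω ∧ 0 < #(S ∩ W) ∧ #(S \ W) + p ≤ k ∧ #(S ∩ W) + #(S \ W) < k := by
  obtain ⟨A, hA, B, hB, hAB, rfl⟩ := mem_interFam.1 hS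
  simp only [thresholdFamily, mem_filter, mem_powersetCard] at hA hB
  obtain ⟨⟨hAΩ, hAk⟩, hAW⟩ := hA
  obtain ⟨⟨hBΩ, hBk⟩, hBW⟩ := hB
  have meet : (A ∩ W ∩ (B ∩ W)).Nonempty :=
    inter_nonempty_of_card_lt_card_add_card inter_subset_right inter_subset_right (by omega)
  have outside : #((A ∩ B) \ W) ≤ #(A \ W) :=
    card_le_card (sdiff_subset_sdiff inter_subset_left le_rfl)
  have hA_split := card_inter_add_card_sdiff A W
  have hS_split := card_inter_add_card_sdiff (A ∩ B) W
  have := card_inter_lt_of_ne hAB (hAk.trans hBk.symm)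
  refine ⟨inter_subset_left.trans hAΩ, card_pos.2 ?_, by omega, by omega⟩
  rwa [inter_inter_distrib_right]

lemma mem_interFam_thresholdFamily_of_trace (hWΩ : W ⊆ Ω) (hW : #W + 1 = 2 * p)
    (hΩ : 2 * k ≤ #Ω + 1) (hSΩ : S ⊆ Ω) (hi : 0 < #(S ∩ W)) (hj : #(S \ W) + p ≤ k)
    (hij : #(S ∩ W) + #(S \ W) < k) :
    S ∈ interFam (thresholdFamily Ω W k p) := by
  set i := #(S ∩ W)
  set j := #(S \ W)
  have hS_split : i + j = #S := card_inter_add_card_sdiff S W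
  have room_in_W := card_sdiff_add_card_inter W S
  rw [inter_comm] at room_in_W
  have room_off_W := card_sdiff_add_card_inter (Ω \ W) S
  rw [card_sdiff_of_subset hWΩ, show (Ω \ W) ∩ S = S \ W by grind] at room_off_W
  have sides : Disjoint W (Ω \ W) := disjoint_sdiff
  obtain ⟨U, hU, U', hU', hUU', hUc, hU'c⟩ :=
    exists_disjoint_subsets_card_eq (s := W \ S) (m := p - i) (by omega)
  obtain ⟨V, hV, V', hV', hVV', hVc, hV'c⟩ :=
    exists_disjoint_subsets_card_eq (s := (Ω \ W) \ S) (m := k - (i + j + (p - i))) (by omega)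
  have mem : ∀ X ⊆ W \ S, ∀ Y ⊆ (Ω \ W) \ S, #X = p - i → #Y = k - (i + j + (p - i)) →
      S ∪ (X ∪ Y) ∈ thresholdFamily Ω W k p := by
    intro X hX Y hY hXc hYc
    have hSX : Disjoint S X := disjoint_of_subset_right hX disjoint_sdiff
    have hSY : Disjoint S Y := disjoint_of_subset_right hY disjoint_sdiff
    have hXY : Disjoint X Y := sides.mono (hX.trans sdiff_subset) (hY.trans sdiff_subset)
    have hW_part : #((S ∩ W) ∪ X) ≤ #((S ∪ (X ∪ Y)) ∩ W) := card_le_card (by grind)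
    rw [card_union_of_disjoint (hSX.mono_left inter_subset_left)] at hW_part
    simp only [thresholdFamily, mem_filter, mem_powersetCard]
    refine ⟨⟨by grind, ?_⟩, by omega⟩
    rw [card_union_of_disjoint (disjoint_union_right.2 ⟨hSX, hSY⟩), card_union_of_disjoint hXY]
    omega
  have disj : Disjoint (U ∪ V) (U' ∪ V') := by
    simp only [disjoint_union_left, disjoint_union_right]
    exact ⟨⟨hUU', sides.symm.mono (hV.trans sdiff_subset) (hU'.trans sdiff_subset)⟩,
      ⟨sides.mono (hU.trans sdiff_subset) (hV'.trans sdiff_subset), hVV'⟩⟩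
  have inter : (S ∪ (U ∪ V)) ∩ (S ∪ (U' ∪ V')) = S := by
    rw [← union_inter_distrib_left, disjoint_iff_inter_eq_empty.1 disj, union_empty]
  have hA := mem U hU V hV hUc hVc
  refine mem_interFam.2 ⟨_, hA, _, mem U' hU' V' hV' hU'c hV'c, fun h => ?_, inter⟩
  rw [← h, inter_self] at inter
  have hAk := (mem_powersetCard.1 (mem_filter.1 hA).1).2
  rw [inter] at hAk
  omega

theorem interFam_thresholdFamily (hWΩ : W ⊆ Ω)
    (hW : #W + 1 = 2 * p) (hΩ : 2 * k ≤ #Ω + 1) :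
    interFam (thresholdFamily Ω W k p) =
      {S ∈ Ω.powerset |
        0 < #(S ∩ W) ∧ #(S \ W) + p ≤ k ∧ #(S ∩ W) + #(S \ W) < k} := by
  ext S
  rw [mem_filter, mem_powerset]
  exact ⟨trace_of_mem_interFam_thresholdFamily hW, fun ⟨hSΩ, hi, hj, hij⟩ =>
    mem_interFam_thresholdFamily_of_trace hWΩ hW hΩ hSΩ hi hj hij⟩

end Threshold

lemma sum_choose_mul_sum_choose_filter {M N k p : ℕ} (hp : 1 ≤ p) (hpM : p ≤ M + 1)
    (hpk : p ≤ k) (hkN : k ≤ N + p) :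
    ∑ i ∈ range (M + 1), M.choose i *
        ∑ j ∈ range (N + 1) with 0 < i ∧ j + p ≤ k ∧ i + j < k, N.choose j =
      (∑ i ∈ Icc 1 (p - 1), M.choose i * ∑ j ∈ range (k - p + 1), N.choose j) +
        ∑ i ∈ Icc p M, M.choose i * ∑ j ∈ range (k - i), N.choose j := by
  have by_trace : ∀ i ∈ range (M + 1), M.choose i *
      ∑ j ∈ range (N + 1) with 0 < i ∧ j + p ≤ k ∧ i + j < k, N.choose j =
        (if i ∈ Icc 1 (p - 1) then M.choose i * ∑ j ∈ range (k - p + 1), N.choose j else 0) +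
          if i ∈ Icc p M then M.choose i * ∑ j ∈ range (k - i), N.choose j else 0 := by
    intro i hi
    rw [mem_range] at hi
    rcases Nat.eq_zero_or_pos i with rfl | hi0
    · rw [if_neg (by simp), if_neg (by simp only [mem_Icc]; omega),
        filter_false_of_mem (by simp), sum_empty, mul_zero, add_zero]
    rcases Nat.lt_or_ge i p with hip | hip
    · rw [if_pos (mem_Icc.2 ⟨hi0, by omega⟩), if_neg (by simp only [mem_Icc]; omega), add_zero]
      congr 2
      ext j
      simp only [mem_filter, mem_range]
      omega
    · rw [if_neg (by simp only [mem_Icc]; omega), if_pos (mem_Icc.2 ⟨hip, by omega⟩), zero_add]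
      congr 2
      ext j
      simp only [mem_filter, mem_range]
      omega
  rw [sum_congr rfl by_trace, sum_add_distrib, sum_ite_mem, sum_ite_mem,
    inter_eq_right.2 fun i hi => by simp only [mem_Icc, mem_range] at hi ⊢; omega,
    inter_eq_right.2 fun i hi => by simp only [mem_Icc, mem_range] at hi ⊢; omega]

theorem stmt_17 (n k p : ℕ) (hp1 : 1 ≤ p) (hpk : p ≤ k) (hn : 2 * k < n) :
    (interFam (((Finset.Icc 1 n).powersetCard k).filter
        (fun A => p ≤ (A ∩ Finset.Icc 1 (2 * p - 1)).card))).card =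
      (∑ i ∈ Finset.Icc 1 (p - 1), (2 * p - 1).choose i *
          ∑ j ∈ Finset.range (k - p + 1), (n - 2 * p + 1).choose j) +
      ∑ i ∈ Finset.Icc p (2 * p - 1), (2 * p - 1).choose i *
          ∑ j ∈ Finset.range (k - i), (n - 2 * p + 1).choose j := by
  have hWΩ : Icc 1 (2 * p - 1) ⊆ Icc 1 n := Icc_subset_Icc_right (by omega)
  have hW : #(Icc 1 (2 * p - 1)) = 2 * p - 1 := by simp
  have hO : #(Icc 1 n \ Icc 1 (2 * p - 1)) = n - 2 * p + 1 := by
    rw [card_sdiff_of_subset hWΩ, hW, Nat.card_Icc]; omega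
  change #(interFam (thresholdFamily (Icc 1 n) (Icc 1 (2 * p - 1)) k p)) = _
  rw [interFam_thresholdFamily hWΩ (by omega) (by rw [Nat.card_Icc]; omega),
    card_filter_powerset_card_inter_card_sdiff hWΩ
      (fun i j => 0 < i ∧ j + p ≤ k ∧ i + j < k),
    hW, hO]
  exact sum_choose_mul_sum_choose_filter hp1 (by omega) hpk (by omega)
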